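/- A straight horizontal path through a cop-free row yields an end-to-end twisting: in the k × J cylindrical grid, for any row i, the path ((i,1), (i,2), …, (i,J)) induces the twisting T = {((i,j),(i,j−1)), ((i,j),(i,j+1)) : 1 < j < J}, which is a twisting of the cylindrical grid that twists exactly the edges {(i,1),(i,2)} and {(i,J−1),(i,J)}, fixes every vertex outside row i, and is ≡^t-compressible. -/
import Mathlib


/-- The `k × J` cylindrical grid: grid adjacency within rows, and the row
dimension is wrapped cyclically. -/
def cylGrid (k J : ℕ) : SimpleGraph (Fin k × Fin J) :=
  SimpleGraph.fromRel (fun u v =>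
    (u.1 = v.1 ∧ u.2.val + 1 = v.2.val) ∨ (u.2 = v.2 ∧ (u.1.val + 1) % k = v.1.val))

/-- The period of row `i`: `fk * p_i * ⋯ * p_{i+t}` with indices of `p` modulo `k`. -/
def period (fk k t : ℕ) (p : ℕ → ℕ) (i : ℕ) : ℕ :=
  fk * ∏ s ∈ Finset.range (t + 1), p ((i + s) % k)

/-- The compression `≡ᵗ` on the `k × J` cylindrical grid (columns `0`-indexed):
`(i,j) ≡ᵗ (i',j')` iff `i = i'`, both columns lie strictly between the two ends
(of width `f(k) = 4k`), and `j - j'` is divisible by the period of row `i`;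
in addition every vertex is equivalent to itself. -/
def cylEquiv (k J t : ℕ) (p : ℕ → ℕ) (u v : Fin k × Fin J) : Prop :=
  u = v ∨ (u.1 = v.1 ∧
    4 * k ≤ u.2.val ∧ u.2.val < J - 4 * k ∧
    4 * k ≤ v.2.val ∧ v.2.val < J - 4 * k ∧
    (period (4 * k) k t p u.1.val : ℤ) ∣ ((u.2.val : ℤ) - (v.2.val : ℤ)))

/-- A `G`-twisting (set-based): directed edges with even out-degree at every vertex. -/
def IsTwisting {V : Type*} (G : SimpleGraph V) (T : Set (V × V)) : Prop :=
  (∀ q ∈ T, G.Adj q.1 q.2) ∧ ∀ u : V, Even (Nat.card {v : V | (u, v) ∈ T})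

/-- `T` twists the edge `e = {u,v}` if exactly one of `(u,v)`, `(v,u)` lies in `T`. -/
def Twists {V : Type*} (T : Set (V × V)) (e : Sym2 V) : Prop :=
  ∃ u v, e = s(u, v) ∧ (((u, v) ∈ T) ↔ ((v, u) ∉ T))

/-- A straight horizontal path through row `i` of the cylindrical grid induces a
`≡ᵗ`-compressible end-to-end twisting that twists exactly the first and last
horizontal edges of row `i` and fixes every vertex outside row `i`. -/
theorem stmt12 (k J t w : ℕ) (p : ℕ → ℕ)
    (hk : 3 ≤ k) (ht1 : 1 ≤ t) (ht2 : t ≤ k - 1) (hw : 2 ≤ w)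
    (hp : ∀ i < k, w / 2 ≤ p i ∧ p i ≤ w)
    (hcop : ∀ i < k, ∀ j < k, i ≠ j → Nat.Coprime (p i) (p j))
    (hJ : J = 4 * k * ∏ i ∈ Finset.range k, p i)
    (i : Fin k)
    (T : Set ((Fin k × Fin J) × (Fin k × Fin J)))
    (hTdef : T = {q | ∃ j j' : Fin J, 0 < j.val ∧ j.val < J - 1 ∧
      (j'.val + 1 = j.val ∨ j'.val = j.val + 1) ∧ q = ((i, j), (i, j'))}) :
    IsTwisting (cylGrid k J) T ∧
    (∀ e : Sym2 (Fin k × Fin J), Twists T e ↔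
      ((∃ a b : Fin J, a.val = 0 ∧ b.val = 1 ∧ e = s((i, a), (i, b))) ∨
       (∃ a b : Fin J, a.val = J - 2 ∧ b.val = J - 1 ∧ e = s((i, a), (i, b))))) ∧
    (∀ u : Fin k × Fin J, u.1 ≠ i → ∀ v, (u, v) ∉ T) ∧
    (∀ (a : Fin k) (j j' : Fin J), cylEquiv k J t p (a, j) (a, j') →
      (∀ b : Fin k, (((a, j), (b, j)) ∈ T ↔ ((a, j'), (b, j')) ∈ T)) ∧
      (∀ c c' : Fin J, c.val = j.val + 1 → c'.val = j'.val + 1 →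
        (((a, j), (a, c)) ∈ T ↔ ((a, j'), (a, c')) ∈ T)) ∧
      (∀ c c' : Fin J, c.val + 1 = j.val → c'.val + 1 = j'.val →
        (((a, j), (a, c)) ∈ T ↔ ((a, j'), (a, c')) ∈ T))) := by

  -- `J` is large
  have hprod : 1 ≤ ∏ s ∈ Finset.range k, p s := by
    apply Finset.one_le_prod'
    intro s hs
    have := hp s (Finset.mem_range.mp hs)
    omega
  have hJ12 : 12 ≤ J := by
    have h1 : 12 ≤ 4 * k := by omega
    have h2 : 4 * k * 1 ≤ 4 * k * ∏ s ∈ Finset.range k, p s :=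
      Nat.mul_le_mul_left _ hprod
    omega
  -- characterization of membership in `T`
  have memT : ∀ (a b : Fin k) (j j' : Fin J),
      ((a, j), (b, j')) ∈ T ↔ (a = i ∧ b = i ∧ 0 < j.val ∧ j.val < J - 1 ∧
        (j'.val + 1 = j.val ∨ j'.val = j.val + 1)) := by
    intro a b j j'
    subst hTdef
    constructor
    · rintro ⟨x, y, h1, h2, h3, heq⟩
      simp only [Prod.mk.injEq] at heq
      obtain ⟨⟨rfl, rfl⟩, rfl, rfl⟩ := heq
      exact ⟨rfl, rfl, h1, h2, h3⟩
    · rintro ⟨rfl, rfl, h1, h2, h3⟩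
      exact ⟨j, j', h1, h2, h3, rfl⟩
  refine ⟨⟨?_, ?_⟩, ?_, ?_, ?_⟩
  · -- edges of T are edges of the graph
    rintro ⟨⟨a, j⟩, ⟨b, j'⟩⟩ hq
    rw [memT] at hq
    obtain ⟨rfl, rfl, h1, h2, h3⟩ := hq
    rw [cylGrid, SimpleGraph.fromRel_adj]
    refine ⟨?_, ?_⟩
    · simp only [ne_eq, Prod.mk.injEq, not_and]
      intro _ hj
      rw [Fin.ext_iff] at hj
      omega
    · rcases h3 with h | h
      · exact Or.inr (Or.inl ⟨rfl, h⟩)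
      · exact Or.inl (Or.inl ⟨rfl, h.symm⟩)
  · -- even out-degree
    rintro ⟨a, j⟩
    by_cases ha : a = i
    · subst ha
      by_cases hj : 0 < j.val ∧ j.val < J - 1
      · have hS : {v | ((a, j), v) ∈ T} =
            {(a, ⟨j.val - 1, by omega⟩), (a, (⟨j.val + 1, by omega⟩ : Fin J))} := by
          ext ⟨b, c⟩
          simp only [Set.mem_setOf_eq, memT, Set.mem_insert_iff,
            Set.mem_singleton_iff, Prod.mk.injEq]
          simp only [Fin.ext_iff, true_and]
          omega
        rw [Nat.card_coe_set_eq, hS, Set.ncard_pair]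
        · exact ⟨1, rfl⟩
        · simp only [ne_eq, Prod.mk.injEq, Fin.ext_iff]
          omega
      · have hS : {v | ((a, j), v) ∈ T} = (∅ : Set (Fin k × Fin J)) := by
          ext ⟨b, c⟩
          simp only [Set.mem_setOf_eq, memT, Set.mem_empty_iff_false, iff_false]
          rintro ⟨-, -, h1, h2, -⟩
          exact hj ⟨h1, h2⟩
        rw [Nat.card_coe_set_eq, hS, Set.ncard_empty]
        exact ⟨0, rfl⟩
    · have hS : {v | ((a, j), v) ∈ T} = (∅ : Set (Fin k × Fin J)) := by
        ext ⟨b, c⟩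
        simp only [Set.mem_setOf_eq, memT, Set.mem_empty_iff_false, iff_false]
        rintro ⟨h, -⟩
        exact ha h
      rw [Nat.card_coe_set_eq, hS, Set.ncard_empty]
      exact ⟨0, rfl⟩
  · -- twisted edges characterization
    intro e
    constructor
    · rintro ⟨⟨a, j⟩, ⟨b, j'⟩, rfl, hiff⟩
      rw [memT, memT] at hiff
      by_cases hP : a = i ∧ b = i ∧ 0 < j.val ∧ j.val < J - 1 ∧
          (j'.val + 1 = j.val ∨ j'.val = j.val + 1)
      · obtain ⟨rfl, rfl, h1, h2, h3⟩ := hP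
        have hnQ := hiff.mp ⟨rfl, rfl, h1, h2, h3⟩
        simp only [true_and, not_and, not_or] at hnQ
        have hQ' : ¬ (0 < j'.val ∧ j'.val < J - 1) := by
          intro hc
          have := hnQ hc.1 hc.2
          omega
        have hj' : j'.val = 0 ∨ j'.val = J - 1 := by
          have := j'.isLt
          omega
        rcases hj' with h0 | hend
        · refine Or.inl ⟨j', j, h0, by omega, ?_⟩
          exact Sym2.eq_swap
        · refine Or.inr ⟨j, j', ?_, hend, rfl⟩
          have := j.isLt
          omega
      · have hQ : b = i ∧ a = i ∧ 0 < j'.val ∧ j'.val < J - 1 ∧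
            (j.val + 1 = j'.val ∨ j.val = j'.val + 1) := by
          by_contra hnQ
          exact hP (hiff.mpr hnQ)
        obtain ⟨rfl, rfl, h1, h2, h3⟩ := hQ
        have hnP : ¬ (0 < j.val ∧ j.val < J - 1) := by
          intro hc
          exact hP ⟨rfl, rfl, hc.1, hc.2, by omega⟩
        have hj0 : j.val = 0 ∨ j.val = J - 1 := by
          have := j.isLt
          omega
        rcases hj0 with h0 | hend
        · refine Or.inl ⟨j, j', h0, by omega, rfl⟩
        · refine Or.inr ⟨j', j, ?_, hend, Sym2.eq_swap⟩
          have := j'.isLt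
          omega
    · rintro (⟨a0, b0, ha0, hb0, rfl⟩ | ⟨a0, b0, ha0, hb0, rfl⟩)
      · refine ⟨(i, b0), (i, a0), Sym2.eq_swap, ?_⟩
        rw [memT, memT]
        constructor
        · rintro -
          rintro ⟨-, -, h1, -, -⟩
          omega
        · rintro -
          exact ⟨rfl, rfl, by omega, by omega, Or.inl (by omega)⟩
      · refine ⟨(i, a0), (i, b0), rfl, ?_⟩
        rw [memT, memT]
        constructor
        · rintro -
          rintro ⟨-, -, -, h2, -⟩
          omega
        · rintro -
          exact ⟨rfl, rfl, by omega, by omega, Or.inr (by omega)⟩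
  · -- vertices outside row i are fixed
    rintro ⟨a, j⟩ hne ⟨b, j'⟩ hmem
    rw [memT] at hmem
    exact hne hmem.1
  · -- compressibility
    intro a j j' heq
    rcases heq with heq | ⟨-, hj1, hj2, hj1', hj2', -⟩
    · have hjj : j = j' := congrArg Prod.snd heq
      subst hjj
      refine ⟨fun b => Iff.rfl, ?_, ?_⟩
      · intro c c' hc hc'
        have : c = c' := Fin.ext (by omega)
        subst this
        exact Iff.rfl
      · intro c c' hc hc'
        have : c = c' := Fin.ext (by omega)
        subst this
        exact Iff.rfl
    · replace hj1 : 4 * k ≤ j.val := hj1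
      replace hj2 : j.val < J - 4 * k := hj2
      replace hj1' : 4 * k ≤ j'.val := hj1'
      replace hj2' : j'.val < J - 4 * k := hj2'
      have h12 : 12 ≤ 4 * k := by omega
      have h0j : 0 < j.val := by omega
      have h0j' : 0 < j'.val := by omega
      have hjJ : j.val < J - 1 := by
        have := Nat.sub_le_sub_left (by omega : 1 ≤ 4 * k) J
        omega
      have hjJ' : j'.val < J - 1 := by
        have := Nat.sub_le_sub_left (by omega : 1 ≤ 4 * k) J
        omega
      refine ⟨?_, ?_, ?_⟩
      · intro b
        rw [memT, memT]
        constructor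
        · rintro ⟨-, -, -, -, h⟩
          exact absurd h (by omega)
        · rintro ⟨-, -, -, -, h⟩
          exact absurd h (by omega)
      · intro c c' hc hc'
        rw [memT, memT]
        constructor
        · rintro ⟨rfl, -, -, -, -⟩
          exact ⟨rfl, rfl, h0j', hjJ', Or.inr (by omega)⟩
        · rintro ⟨rfl, -, -, -, -⟩
          exact ⟨rfl, rfl, h0j, hjJ, Or.inr (by omega)⟩
      · intro c c' hc hc'
        rw [memT, memT]
        constructor
        · rintro ⟨rfl, -, -, -, -⟩
          exact ⟨rfl, rfl, h0j', hjJ', Or.inl (by omega)⟩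
        · rintro ⟨rfl, -, -, -, -⟩
          exact ⟨rfl, rfl, h0j, hjJ, Or.inl (by omega)⟩
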